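/- arXiv:2405.03590 — 5 statements merged into one kernel-verified Lean document; each statement's English description precedes it below -/
import Mathlib

section
/- Let q_i, q_j be probability vectors in R^K whose maxima are attained at distinct indices r ≠ o (with q_i(r) = max q_i and q_j(o) = max q_j). If q_i^T q_j ≥ ζ (so that q_i(r) ≥ ζ and q_j(o) ≥ ζ), then q_i^T q_j ≤ 2(1 − ζ). -/
/-!
Both maxima dominate the inner product: averaging `qj` against the weights `qi` gives
`ζ ≤ qiᵀqj ≤ qj o`, and symmetrically `ζ ≤ qi r`. Splitting the inner product at `r`,
`qiᵀqj ≤ qj r + (1 - qi r)`, and `qj r ≤ 1 - qj o` because `r ≠ o`.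
-/

open Finset

section ProbabilityVector

variable {ι : Type*} [Fintype ι] {p q : ι → ℝ}

lemma le_one_of_nonneg_of_sum_eq_one (hp0 : ∀ l, 0 ≤ p l) (hp1 : ∑ l, p l = 1) (m : ι) :
    p m ≤ 1 :=
  hp1 ▸ single_le_sum (fun l _ => hp0 l) (mem_univ m)

lemma sum_mul_le_of_forall_le {c : ℝ} (hp0 : ∀ l, 0 ≤ p l) (hp1 : ∑ l, p l = 1)
    (hq : ∀ l, q l ≤ c) : ∑ l, p l * q l ≤ c :=
  calc ∑ l, p l * q l ≤ ∑ l, p l * c := sum_le_sum fun l _ => by gcongr; exacts [hp0 l, hq l]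
    _ = c := by rw [← sum_mul, hp1, one_mul]

lemma add_le_one_of_ne [DecidableEq ι] (hq0 : ∀ l, 0 ≤ q l) (hq1 : ∑ l, q l = 1)
    {r o : ι} (hro : r ≠ o) : q r + q o ≤ 1 := by
  rw [← sum_pair hro, ← hq1]
  exact sum_le_sum_of_subset_of_nonneg (subset_univ _) fun l _ _ => hq0 l

lemma sum_mul_le_apply_add_one_sub [DecidableEq ι] (hp0 : ∀ l, 0 ≤ p l) (hp1 : ∑ l, p l = 1)
    (hq0 : ∀ l, 0 ≤ q l) (hq1 : ∑ l, q l = 1) (r : ι) :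
    ∑ l, p l * q l ≤ q r + (1 - p r) := by
  have hrest : ∑ l ∈ univ.erase r, p l = 1 - p r := by
    rw [← hp1, ← add_sum_erase univ p (mem_univ r), add_sub_cancel_left]
  rw [← add_sum_erase univ _ (mem_univ r), ← hrest]
  gcongr with l
  · exact mul_le_of_le_one_left (hq0 r) (le_one_of_nonneg_of_sum_eq_one hp0 hp1 r)
  · exact mul_le_of_le_one_right (hp0 l) (le_one_of_nonneg_of_sum_eq_one hq0 hq1 l)

end ProbabilityVector

theorem stmt2_general (K : ℕ) (qi qj : Fin K → ℝ) (ζ : ℝ)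
    (hi0 : ∀ l, 0 ≤ qi l) (hj0 : ∀ l, 0 ≤ qj l)
    (hi1 : ∑ l, qi l = 1) (hj1 : ∑ l, qj l = 1)
    (r o : Fin K) (hro : r ≠ o)
    (hr : ∀ l, qi l ≤ qi r) (ho : ∀ l, qj l ≤ qj o)
    (hip : ζ ≤ ∑ l, qi l * qj l) :
    ∑ l, qi l * qj l ≤ 2 * (1 - ζ) := by
  have hqjo : ∑ l, qi l * qj l ≤ qj o := sum_mul_le_of_forall_le hi0 hi1 ho
  have hqir : ∑ l, qi l * qj l ≤ qi r := by
    simpa only [mul_comm] using sum_mul_le_of_forall_le hj0 hj1 hr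
  have hsplit := sum_mul_le_apply_add_one_sub hi0 hi1 hj0 hj1 r
  have hjro := add_le_one_of_ne hj0 hj1 hro
  linarith

theorem stmt2 (K : ℕ) (qi qj : Fin K → ℝ) (ζ : ℝ) (hζ0 : 0 ≤ ζ) (hζ1 : ζ ≤ 1)
    (hi0 : ∀ l, 0 ≤ qi l) (hj0 : ∀ l, 0 ≤ qj l)
    (hi1 : ∑ l, qi l = 1) (hj1 : ∑ l, qj l = 1)
    (r o : Fin K) (hro : r ≠ o)
    (hr : ∀ l, qi l ≤ qi r) (ho : ∀ l, qj l ≤ qj o)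
    (hip : ζ ≤ ∑ l, qi l * qj l) :
    ∑ l, qi l * qj l ≤ 2 * (1 - ζ) :=
  stmt2_general K qi qj ζ hi0 hj0 hi1 hj1 r o hro hr ho hip
end

section
/- Let ζ > 2/3 and let q_i, q_j be probability vectors in R^K with q_i^T q_j ≥ ζ. Then the maxima of q_i and q_j are attained at a common index; i.e., there exists an index β with q_i(β) = max_l q_i(l) and q_j(β) = max_l q_j(l). -/
theorem stmt3 (K : ℕ) (qi qj : Fin K → ℝ) (ζ : ℝ) (hζ : 2/3 < ζ)
    (hi0 : ∀ l, 0 ≤ qi l) (hj0 : ∀ l, 0 ≤ qj l)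
    (hi1 : ∑ l, qi l = 1) (hj1 : ∑ l, qj l = 1)
    (hip : ζ ≤ ∑ l, qi l * qj l) :
    ∃ β : Fin K, (∀ l, qi l ≤ qi β) ∧ (∀ l, qj l ≤ qj β) := by
  have hne : (Finset.univ : Finset (Fin K)).Nonempty := by
    by_contra h
    rw [Finset.not_nonempty_iff_eq_empty] at h
    rw [h, Finset.sum_empty] at hi1
    norm_num at hi1
  obtain ⟨α, -, hα⟩ := Finset.exists_max_image Finset.univ qi hne
  obtain ⟨β, -, hβ⟩ := Finset.exists_max_image Finset.univ qj hne
  by_cases hEq : α = β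
  · exact ⟨α, fun l => hα l (Finset.mem_univ l),
      fun l => by rw [hEq]; exact hβ l (Finset.mem_univ l)⟩
  · exfalso
    set a := qi α with ha_def
    set b := qj β with hb_def
    have hSa : ∑ l, qi l * qj l ≤ a := by
      calc ∑ l, qi l * qj l ≤ ∑ l, a * qj l :=
            Finset.sum_le_sum (fun l _ =>
              mul_le_mul_of_nonneg_right (hα l (Finset.mem_univ l)) (hj0 l))
        _ = a := by rw [← Finset.mul_sum, hj1, mul_one]
    have hSb : ∑ l, qi l * qj l ≤ b := by
      calc ∑ l, qi l * qj l ≤ ∑ l, qi l * b :=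
            Finset.sum_le_sum (fun l _ =>
              mul_le_mul_of_nonneg_left (hβ l (Finset.mem_univ l)) (hi0 l))
        _ = b := by rw [← Finset.sum_mul, hi1, one_mul]
    have ha : ζ ≤ a := le_trans hip hSa
    have hb : ζ ≤ b := le_trans hip hSb
    -- qj α ≤ 1 - b since α ≠ β
    have hmemα : α ∈ Finset.univ.erase β :=
      Finset.mem_erase.mpr ⟨hEq, Finset.mem_univ α⟩
    have hsum_erase_j : ∑ l ∈ Finset.univ.erase β, qj l = 1 - b := by
      have := Finset.sum_erase_add Finset.univ qj (Finset.mem_univ β)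
      rw [hj1] at this
      linarith
    have hqjα : qj α ≤ 1 - b := by
      rw [← hsum_erase_j]
      exact Finset.single_le_sum (fun l _ => hj0 l) hmemα
    have hsum_erase_i : ∑ l ∈ Finset.univ.erase α, qi l = 1 - a := by
      have := Finset.sum_erase_add Finset.univ qi (Finset.mem_univ α)
      rw [hi1] at this
      linarith
    have hsplit : ∑ l, qi l * qj l
        = qi α * qj α + ∑ l ∈ Finset.univ.erase α, qi l * qj l :=
      (Finset.add_sum_erase Finset.univ (fun l => qi l * qj l)
        (Finset.mem_univ α)).symm
    have h1 : qi α * qj α ≤ a * (1 - b) :=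
      mul_le_mul_of_nonneg_left hqjα (hi0 α)
    have h2 : ∑ l ∈ Finset.univ.erase α, qi l * qj l ≤ b * (1 - a) := by
      calc ∑ l ∈ Finset.univ.erase α, qi l * qj l
          ≤ ∑ l ∈ Finset.univ.erase α, qi l * b :=
            Finset.sum_le_sum (fun l _ =>
              mul_le_mul_of_nonneg_left (hβ l (Finset.mem_univ l)) (hi0 l))
        _ = b * (1 - a) := by rw [← Finset.sum_mul, hsum_erase_i, mul_comm]
    have hfinal : ζ ≤ a * (1 - b) + b * (1 - a) := by
      rw [hsplit] at hip
      linarith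
    nlinarith [mul_nonneg (sub_nonneg.2 ha) (sub_nonneg.2 hb),
      mul_pos (sub_pos.2 hζ) (sub_pos.2 hζ)]
end

section
/- Let ζ > 2/3 and γ < ζ². Let q_i, q_j, q_k be probability vectors in R^K with q_i^T q_j ≥ ζ and q_i^T q_k ≥ ζ. Then q_j^T q_k > γ (in particular, it is not the case that q_j^T q_k ≤ γ). -/
lemma key_lem (K : ℕ) (a b : Fin K → ℝ) (ζ : ℝ) (hζ : 0 < ζ)
    (ha0 : ∀ l, 0 ≤ a l) (hb0 : ∀ l, 0 ≤ b l)
    (ha1 : ∑ l, a l = 1) (hb1 : ∑ l, b l = 1)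
    (hab : ζ ≤ ∑ l, a l * b l) :
    ∃ m, ζ ≤ b m ∧ 2 * ζ - 1 ≤ a m * ζ := by
  -- first find m with ζ ≤ b m
  have hex : ∃ m, ζ ≤ b m := by
    by_contra h
    push_neg at h
    have hl0 : ∃ l, 0 < a l := by
      by_contra h'
      push_neg at h'
      have : ∀ l ∈ Finset.univ, a l = 0 := fun l _ => le_antisymm (h' l) (ha0 l)
      have := Finset.sum_eq_zero this
      rw [ha1] at this; norm_num at this
    obtain ⟨l0, hl0⟩ := hl0
    have hlt : ∑ l, a l * b l < ∑ l, a l * ζ := by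
      apply Finset.sum_lt_sum
      · intro i _
        exact mul_le_mul_of_nonneg_left (le_of_lt (h i)) (ha0 i)
      · exact ⟨l0, Finset.mem_univ _, by nlinarith [h l0]⟩
    rw [← Finset.sum_mul, ha1, one_mul] at hlt
    linarith
  obtain ⟨m, hm⟩ := hex
  refine ⟨m, hm, ?_⟩
  have hb1' : b m ≤ 1 := by
    have := Finset.single_le_sum (f := b) (fun l _ => hb0 l) (Finset.mem_univ m)
    linarith [hb1 ▸ this]
  have hζ1 : ζ ≤ 1 := le_trans hm hb1'
  -- every other coordinate of b is ≤ 1 - ζ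
  have hsmall : ∀ l, l ≠ m → b l ≤ 1 - ζ := by
    intro l hl
    have h1 : b l + b m ≤ ∑ l, b l := by
      have hsub : ({l, m} : Finset (Fin K)) ⊆ Finset.univ := Finset.subset_univ _
      have := Finset.sum_le_sum_of_subset_of_nonneg hsub (fun i _ _ => hb0 i)
      rwa [Finset.sum_pair hl] at this
    rw [hb1] at h1; linarith
  -- split the sum
  have hsplit : ∑ l, a l * b l = a m * b m + ∑ l ∈ Finset.univ.erase m, a l * b l := by
    rw [← Finset.add_sum_erase _ _ (Finset.mem_univ m)]
  have herase_a : ∑ l ∈ Finset.univ.erase m, a l = 1 - a m := by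
    have := Finset.add_sum_erase _ a (Finset.mem_univ m)
    rw [ha1] at this; linarith
  have hbound : ∑ l ∈ Finset.univ.erase m, a l * b l
      ≤ (1 - ζ) * (1 - a m) := by
    calc ∑ l ∈ Finset.univ.erase m, a l * b l
        ≤ ∑ l ∈ Finset.univ.erase m, a l * (1 - ζ) := by
          apply Finset.sum_le_sum
          intro i hi
          exact mul_le_mul_of_nonneg_left (hsmall i (Finset.ne_of_mem_erase hi)) (ha0 i)
      _ = (1 - ζ) * (1 - a m) := by rw [← Finset.sum_mul, herase_a]; ring
  have ham1 : a m ≤ 1 := by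
    have := Finset.single_le_sum (f := a) (fun l _ => ha0 l) (Finset.mem_univ m)
    linarith [ha1 ▸ this]
  have : ζ ≤ a m * b m + (1 - ζ) * (1 - a m) := by
    rw [hsplit] at hab; linarith
  nlinarith [ha0 m]

theorem stmt5 (K : ℕ) (qi qj qk : Fin K → ℝ) (ζ γ : ℝ)
    (hζ : 2/3 < ζ) (hγ0 : 0 ≤ γ) (hγ : γ < ζ ^ 2)
    (hi0 : ∀ l, 0 ≤ qi l) (hj0 : ∀ l, 0 ≤ qj l) (hk0 : ∀ l, 0 ≤ qk l)
    (hi1 : ∑ l, qi l = 1) (hj1 : ∑ l, qj l = 1) (hk1 : ∑ l, qk l = 1)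
    (hij : ζ ≤ ∑ l, qi l * qj l) (hik : ζ ≤ ∑ l, qi l * qk l) :
    γ < ∑ l, qj l * qk l := by
  have hζ0 : (0:ℝ) < ζ := by linarith
  obtain ⟨m, hbm, ham⟩ := key_lem K qi qj ζ hζ0 hi0 hj0 hi1 hj1 hij
  obtain ⟨n, hcn, han⟩ := key_lem K qi qk ζ hζ0 hi0 hk0 hi1 hk1 hik
  have hmn : m = n := by
    by_contra h
    have h1 : qi m + qi n ≤ ∑ l, qi l := by
      have hsub : ({m, n} : Finset (Fin K)) ⊆ Finset.univ := Finset.subset_univ _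
      have := Finset.sum_le_sum_of_subset_of_nonneg hsub (fun i _ _ => hi0 i)
      rwa [Finset.sum_pair h] at this
    rw [hi1] at h1
    nlinarith
  subst hmn
  have hfin : qj m * qk m ≤ ∑ l, qj l * qk l := by
    apply Finset.single_le_sum (f := fun l => qj l * qk l)
      (fun l _ => mul_nonneg (hj0 l) (hk0 l)) (Finset.mem_univ m)
  nlinarith
end

section
/- Let ζ > 2/3 and let q_i, q_j, q_k be probability vectors in R^K with q_i^T q_j ≥ ζ and q_i^T q_k ≥ ζ. Then there exists an index η that simultaneously attains the maxima of q_i, q_j, and q_k (all three belong to the same cluster). -/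
/-!
If `q` is maximal at `η` and `⟪q, p⟫ > 2/3` for probability vectors `p`, `q`, then on the one hand
`q η ≥ ⟪q, p⟫ > 2/3`, and on the other hand `⟪q, p⟫ ≤ q η * p η + (1 - q η)`. Together these force
`p η > 1/2`, so `η` is also a maximum of `p`. Applying this to `q = qi` and `p = qj`, `p = qk`
gives a common maximum.
-/

open Finset

variable {𝕜 ι : Type*} [Field 𝕜] [LinearOrder 𝕜] [IsStrictOrderedRing 𝕜] [Fintype ι]
  {p q : ι → 𝕜}

lemma sum_mul_le_of_forall_le_s9 (hp : p ∈ stdSimplex 𝕜 ι) {η : ι} (hη : ∀ l, q l ≤ q η) :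
    ∑ l, q l * p l ≤ q η :=
  calc ∑ l, q l * p l ≤ ∑ l, q η * p l :=
        sum_le_sum fun l _ => mul_le_mul_of_nonneg_right (hη l) (hp.1 l)
    _ = q η := by rw [← mul_sum, hp.2, mul_one]

lemma sum_mul_le_mul_add_one_sub (hq : q ∈ stdSimplex 𝕜 ι) (hp : p ∈ stdSimplex 𝕜 ι) (η : ι) :
    ∑ l, q l * p l ≤ q η * p η + (1 - q η) := by
  classical
  have hrest : ∑ l ∈ univ.erase η, q l * p l ≤ ∑ l ∈ univ.erase η, q l :=
    sum_le_sum fun l _ => mul_le_of_le_one_right (hq.1 l) (mem_Icc_of_mem_stdSimplex hp l).2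
  rw [sum_erase_eq_sub (mem_univ η), sum_erase_eq_sub (mem_univ η), hq.2] at hrest
  linarith

lemma forall_le_of_half_lt (hp : p ∈ stdSimplex 𝕜 ι) {η : ι} (hη : 1 / 2 < p η) :
    ∀ l, p l ≤ p η := by
  intro l
  rcases eq_or_ne l η with rfl | hl
  · rfl
  · have := add_le_sum (fun m _ => hp.1 m) (mem_univ l) (mem_univ η) hl
    linarith [hp.2]

lemma forall_le_of_forall_le_of_two_thirds_lt_sum_mul (hq : q ∈ stdSimplex 𝕜 ι)
    (hp : p ∈ stdSimplex 𝕜 ι) {η : ι} (hη : ∀ l, q l ≤ q η) (h : 2 / 3 < ∑ l, q l * p l) :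
    ∀ l, p l ≤ p η := by
  apply forall_le_of_half_lt hp
  have hqη := sum_mul_le_of_forall_le_s9 hp hη
  have hsplit := sum_mul_le_mul_add_one_sub hq hp η
  nlinarith [(mem_Icc_of_mem_stdSimplex hp η).2]

theorem stmt9 (K : ℕ) (qi qj qk : Fin K → ℝ) (ζ : ℝ) (hζ : 2/3 < ζ)
    (hi0 : ∀ l, 0 ≤ qi l) (hj0 : ∀ l, 0 ≤ qj l) (hk0 : ∀ l, 0 ≤ qk l)
    (hi1 : ∑ l, qi l = 1) (hj1 : ∑ l, qj l = 1) (hk1 : ∑ l, qk l = 1)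
    (hij : ζ ≤ ∑ l, qi l * qj l) (hik : ζ ≤ ∑ l, qi l * qk l) :
    ∃ η : Fin K, (∀ l, qi l ≤ qi η) ∧ (∀ l, qj l ≤ qj η) ∧ (∀ l, qk l ≤ qk η) := by
  have : Nonempty (Fin K) :=
    univ_nonempty_iff.mp (nonempty_of_sum_ne_zero (hi1 ▸ one_ne_zero))
  obtain ⟨η, hη⟩ := Finite.exists_max qi
  have hqi : qi ∈ stdSimplex ℝ (Fin K) := ⟨hi0, hi1⟩
  exact ⟨η, hη,
    forall_le_of_forall_le_of_two_thirds_lt_sum_mul hqi ⟨hj0, hj1⟩ hη (hζ.trans_le hij),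
    forall_le_of_forall_le_of_two_thirds_lt_sum_mul hqi ⟨hk0, hk1⟩ hη (hζ.trans_le hik)⟩
end

section
/- Let ζ > 2/3 and suppose q_1, …, q_n are probability vectors in R^K such that consecutive vectors are adjacent: q_t^T q_{t+1} ≥ ζ for all t. Then all q_t share a common argmax index; in particular q_1 and q_n have the same argmax index. -/
/-!
For probability vectors `p`, `q`, the inner product `p ⬝ᵥ q` is a `p`-weighted average of `q`, so
it is at most `max q`, and symmetrically at most `max p`; hence both maxima are at least `ζ`.
Splitting off an argmax `i` of `p` also gives `p ⬝ᵥ q ≤ q i + (1 - p i)`, so `q i ≥ 2ζ - 1`.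
Two distinct coordinates of `q` sum to at most `1`, and `ζ + (2ζ - 1) > 1` as `ζ > 2/3`; so the
argmax of `q` is `i`. Induction along the chain propagates the argmax of `q 0`.
-/

open Finset

def IsArgmax {ι α : Type*} [Preorder α] (f : ι → α) (i : ι) : Prop :=
  ∀ l, f l ≤ f i

section ProbabilityVectors

variable {ι : Type*} [Fintype ι] {p q : ι → ℝ}

lemma dotProduct_le_of_forall_le (hp : p ∈ stdSimplex ℝ ι) {c : ℝ} (hq : ∀ l, q l ≤ c) :
    p ⬝ᵥ q ≤ c :=
  calc p ⬝ᵥ q ≤ ∑ l, p l * c := sum_le_sum fun l _ => mul_le_mul_of_nonneg_left (hq l) (hp.1 l)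
    _ = c := by rw [← sum_mul, hp.2, one_mul]

lemma dotProduct_le_apply_add_one_sub (hp : p ∈ stdSimplex ℝ ι) (hq : q ∈ stdSimplex ℝ ι)
    (i : ι) : p ⬝ᵥ q ≤ q i + (1 - p i) := by
  classical
  have hrest : ∑ l ∈ univ.erase i, p l * q l ≤ 1 - p i :=
    calc ∑ l ∈ univ.erase i, p l * q l ≤ ∑ l ∈ univ.erase i, p l :=
          sum_le_sum fun l _ => mul_le_of_le_one_right (hp.1 l) (mem_Icc_of_mem_stdSimplex hq l).2
      _ = 1 - p i := by rw [sum_erase_eq_sub (mem_univ i), hp.2]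
  calc p ⬝ᵥ q = p i * q i + ∑ l ∈ univ.erase i, p l * q l := (add_sum_erase _ _ (mem_univ i)).symm
    _ ≤ q i + (1 - p i) :=
      add_le_add (mul_le_of_le_one_left (hq.1 i) (mem_Icc_of_mem_stdSimplex hp i).2) hrest

lemma add_le_one_of_mem_stdSimplex (hq : q ∈ stdSimplex ℝ ι) {i j : ι} (hij : i ≠ j) :
    q i + q j ≤ 1 := by
  classical
  rw [← sum_pair hij, ← hq.2]
  exact sum_le_univ_sum_of_nonneg hq.1

theorem IsArgmax.of_le_dotProduct (hp : p ∈ stdSimplex ℝ ι) (hq : q ∈ stdSimplex ℝ ι) {ζ : ℝ}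
    (hζ : 2 / 3 < ζ) (hpq : ζ ≤ p ⬝ᵥ q) {i : ι} (hi : IsArgmax p i) : IsArgmax q i := by
  have hpi : ζ ≤ p i :=
    hpq.trans ((dotProduct_comm p q).trans_le (dotProduct_le_of_forall_le hq hi))
  have hqi : 2 * ζ - 1 ≤ q i := by linarith [dotProduct_le_apply_add_one_sub hp hq i]
  obtain ⟨j, -, hj⟩ := exists_max_image univ q ⟨i, mem_univ i⟩
  have hqj : ζ ≤ q j := hpq.trans (dotProduct_le_of_forall_le hp fun l => hj l (mem_univ l))
  obtain rfl : i = j := by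
    by_contra hij
    linarith [add_le_one_of_mem_stdSimplex hq hij]
  exact fun l => hj l (mem_univ l)

end ProbabilityVectors

theorem stmt19 (K n : ℕ) (hn : 1 ≤ n) (q : ℕ → Fin K → ℝ) (ζ : ℝ) (hζ : 2/3 < ζ)
    (h0 : ∀ t, t < n → ∀ l, 0 ≤ q t l)
    (h1 : ∀ t, t < n → ∑ l, q t l = 1)
    (hadj : ∀ t, t + 1 < n → ζ ≤ ∑ l, q t l * q (t + 1) l) :
    ∃ η : Fin K, ∀ t, t < n → ∀ l, q t l ≤ q t η := by
  have hsimplex : ∀ t < n, q t ∈ stdSimplex ℝ (Fin K) := fun t ht => ⟨h0 t ht, h1 t ht⟩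
  have : Nonempty (Fin K) := by
    by_contra hK
    simpa [not_nonempty_iff.mp hK] using h1 0 hn
  obtain ⟨η, -, hη⟩ := exists_max_image univ (q 0) univ_nonempty
  refine ⟨η, fun t => ?_⟩
  induction t with
  | zero => exact fun _ l => hη l (mem_univ l)
  | succ t ih =>
    intro ht
    exact IsArgmax.of_le_dotProduct (hsimplex t (by omega)) (hsimplex (t + 1) ht) hζ (hadj t ht)
      (ih (by omega))
end
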